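/- arXiv:2404.06656 — 2 statements merged into one kernel-verified Lean document; each statement's English description precedes it below -/
import Mathlib

section
/- For every integer n ≥ 1, the number 99·R_n, where R_n = (10^n − 1)/9 is the repunit with n ones, is a Ball magic number; that is, there exists a natural number x with rev(x) < x such that Ball(x) = 99·R_n. -/
/-- Digit reversal of a natural number in base 10. -/
def rev (m : ℕ) : ℕ := Nat.ofDigits 10 ((Nat.digits 10 m).reverse)

/-- Reversal of `y` padded with zeros up to length `L`. -/
def revPad (L y : ℕ) : ℕ :=
  Nat.ofDigits 10 ((Nat.digits 10 y ++ List.replicate (L - (Nat.digits 10 y).length) 0).reverse)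

/-- Ball number generated by `x` (meaningful when `rev x < x`). -/
def ball (x : ℕ) : ℕ :=
  (x - rev x) + revPad ((Nat.digits 10 x).length) (x - rev x)

/-- `B` is a Ball magic number. -/
def IsBallMagic (B : ℕ) : Prop := ∃ x : ℕ, rev x < x ∧ ball x = B

/-- The repunit with `n` ones. -/
def repunit (n : ℕ) : ℕ := (10 ^ n - 1) / 9

lemma digits_ten_pow (n : ℕ) : Nat.digits 10 (10 ^ n) = List.replicate n 0 ++ [1] := by
  induction n with
  | zero => simp
  | succ n ih =>
    rw [Nat.digits_def' (by norm_num : 1 < 10) (by positivity)]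
    have h1 : 10 ^ (n + 1) % 10 = 0 := by
      simp [pow_succ, Nat.mul_mod_left]
    have h2 : 10 ^ (n + 1) / 10 = 10 ^ n := by
      rw [pow_succ]; exact Nat.mul_div_cancel _ (by norm_num)
    rw [h1, h2, ih, List.replicate_succ]
    simp

lemma digits_ten_pow_sub_one (n : ℕ) :
    Nat.digits 10 (10 ^ n - 1) = List.replicate n 9 := by
  induction n with
  | zero => simp
  | succ n ih =>
    have hpos : 0 < 10 ^ (n + 1) - 1 := by
      have : (10:ℕ) ^ (n+1) ≥ 10 := by
        calc (10:ℕ) ≤ 10 ^ 1 := by norm_num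
        _ ≤ 10 ^ (n+1) := Nat.pow_le_pow_right (by norm_num) (by omega)
      omega
    rw [Nat.digits_def' (by norm_num : 1 < 10) hpos]
    have hpow : (10:ℕ) ^ (n+1) = 10 * 10 ^ n := by ring
    have h1 : 10 ^ n ≥ 1 := Nat.one_le_pow _ _ (by norm_num)
    have heq : 10 ^ (n + 1) - 1 = 10 * (10 ^ n - 1) + 9 := by omega
    rw [heq]
    have h1' : (10 * (10 ^ n - 1) + 9) % 10 = 9 := by omega
    have h2 : (10 * (10 ^ n - 1) + 9) / 10 = 10 ^ n - 1 := by omega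
    rw [h1', h2, ih, List.replicate_succ]

lemma ofDigits_replicate_zero (n : ℕ) :
    Nat.ofDigits 10 (List.replicate n 0) = 0 := by
  induction n with
  | zero => simp
  | succ n ih => rw [List.replicate_succ, Nat.ofDigits_cons, ih]

lemma ofDigits_replicate_nine (n : ℕ) :
    Nat.ofDigits 10 (List.replicate n 9) = 10 ^ n - 1 := by
  induction n with
  | zero => simp
  | succ n ih =>
    rw [List.replicate_succ, Nat.ofDigits_cons, ih]
    have h1 : (10:ℕ) ^ n ≥ 1 := Nat.one_le_pow _ _ (by norm_num)
    rw [pow_succ]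
    omega

theorem ballMagic_99_mul_repunit (n : ℕ) (hn : 1 ≤ n) :
    IsBallMagic (99 * repunit n) := by
  refine ⟨10 ^ n, ?_, ?_⟩
  · have : rev (10 ^ n) = 1 := by
      unfold rev
      rw [digits_ten_pow]
      simp [Nat.ofDigits_cons, Nat.ofDigits_append, ofDigits_replicate_zero]
    rw [this]
    exact Nat.one_lt_pow (by omega) (by norm_num)
  · have h1 : (10:ℕ) ^ n ≥ 10 := by
      calc (10:ℕ) = 10 ^ 1 := by norm_num
      _ ≤ 10 ^ n := Nat.pow_le_pow_right (by norm_num) hn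
    have hrev : rev (10 ^ n) = 1 := by
      unfold rev
      rw [digits_ten_pow]
      simp [Nat.ofDigits_cons, Nat.ofDigits_append, ofDigits_replicate_zero]
    unfold ball
    rw [hrev, digits_ten_pow]
    have hlen : (List.replicate n 0 ++ [1]).length = n + 1 := by simp
    rw [hlen]
    unfold revPad
    rw [digits_ten_pow_sub_one]
    have hlen2 : (List.replicate n 9).length = n := by simp
    rw [hlen2]
    have : n + 1 - n = 1 := by omega
    rw [this]
    have hrev2 : (List.replicate n 9 ++ List.replicate 1 0).reverse
        = 0 :: List.replicate n 9 := by simp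
    rw [hrev2, Nat.ofDigits_cons, ofDigits_replicate_nine]
    have hdiv : (9:ℕ) ∣ 10 ^ n - 1 := by
      have := Nat.sub_dvd_pow_sub_pow 10 1 n
      simpa using this
    unfold repunit
    obtain ⟨k, hk⟩ := hdiv
    rw [hk]
    rw [Nat.mul_div_cancel_left _ (by norm_num : (0:ℕ) < 9)]
    ring
end

section
/- For every integer n ≥ 2, there exist two positive Ball magic numbers B₁ and B₂ such that 11·(10^n − 1) = B₁ + B₂. -/
lemma ofDigits_rep0 (k : ℕ) : Nat.ofDigits 10 (List.replicate k 0) = 0 := by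
  induction k with
  | zero => simp
  | succ k ih => simp [List.replicate_succ, Nat.ofDigits_cons, ih]

lemma ofDigits_rep9 (k : ℕ) : Nat.ofDigits 10 (List.replicate k 9) = 10 ^ k - 1 := by
  induction k with
  | zero => simp
  | succ k ih =>
    have h : 1 ≤ 10 ^ k := Nat.one_le_pow _ _ (by norm_num)
    rw [List.replicate_succ, Nat.ofDigits_cons, ih, pow_succ]
    omega

lemma getLast_app {l : List ℕ} {a : ℕ} (h : l ++ [a] ≠ []) : (l ++ [a]).getLast h = a :=
  List.getLast_concat

lemma digits_of_list (L : List ℕ) (a : ℕ) (hlt : ∀ l ∈ L ++ [a], l < 10) (ha : a ≠ 0) :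
    Nat.digits 10 (Nat.ofDigits 10 (L ++ [a])) = L ++ [a] := by
  refine Nat.digits_ofDigits 10 (by norm_num) _ hlt ?_
  intro h
  rw [getLast_app]
  exact ha

lemma magic1 (m : ℕ) (hm : 1 ≤ m) : IsBallMagic (11 * (10 ^ m - 1)) := by
  have hp : (10:ℕ) ≤ 10 ^ m := by
    calc (10:ℕ) = 10 ^ 1 := (pow_one 10).symm
    _ ≤ 10 ^ m := Nat.pow_le_pow_right (by norm_num) hm
  set x := 2 * 10 ^ m + 1 with hx
  have hL : Nat.digits 10 x = (1 :: List.replicate (m - 1) 0) ++ [2] := by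
    have h1 : Nat.ofDigits 10 ((1 :: List.replicate (m - 1) 0) ++ [2]) = x := by
      rw [Nat.ofDigits_append, Nat.ofDigits_cons, ofDigits_rep0]
      simp [Nat.ofDigits]
      rw [show m - 1 + 1 = m by omega]
      ring
    rw [← h1]
    refine digits_of_list _ _ ?_ (by norm_num)
    intro l hl
    simp [List.mem_replicate] at hl
    rcases hl with h | h | h <;> omega
  have hrev : rev x = 10 ^ m + 2 := by
    rw [rev, hL]
    simp only [List.reverse_append, List.reverse_cons, List.reverse_replicate]
    rw [show ([].reverse ++ [2] ++ (List.replicate (m-1) 0 ++ [1]) : List ℕ) =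
      2 :: (List.replicate (m-1) 0 ++ [1]) by simp]
    rw [Nat.ofDigits_cons, Nat.ofDigits_append, ofDigits_rep0]
    simp [Nat.ofDigits]
    have h10 : (10:ℕ) * 10 ^ (m-1) = 10 ^ m := by
      rw [← pow_succ']; congr 1; omega
    omega
  have hd : x - rev x = 10 ^ m - 1 := by rw [hrev]; omega
  have hdd : Nat.digits 10 (10 ^ m - 1) = List.replicate m 9 := by
    have h9 : List.replicate m 9 = List.replicate (m-1) 9 ++ [9] := by
      rw [← List.replicate_succ']
      congr 1
      omega
    rw [← ofDigits_rep9, h9]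
    refine digits_of_list _ _ ?_ (by norm_num)
    intro l hl
    simp [List.mem_replicate] at hl
    rcases hl with h | h <;> omega
  have hlen : (Nat.digits 10 x).length = m + 1 := by
    rw [hL]; simp; omega
  have hpad : revPad (m + 1) (10 ^ m - 1) = 10 * (10 ^ m - 1) := by
    rw [revPad, hdd]
    simp only [List.length_replicate]
    rw [show m + 1 - m = 1 by omega]
    rw [List.reverse_append, List.reverse_replicate, List.reverse_replicate,
        Nat.ofDigits_append, ofDigits_rep0, ofDigits_rep9]
    simp
  refine ⟨x, by omega, ?_⟩
  rw [ball, hd, hlen, hpad]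
  omega

lemma magic2 (n : ℕ) (hn : 2 ≤ n) : IsBallMagic (99 * 10 ^ (n - 1)) := by
  have hq : (1:ℕ) ≤ 10 ^ (n - 2) := Nat.one_le_pow _ _ (by norm_num)
  have h1 : (10:ℕ) ^ (n - 1) = 10 * 10 ^ (n - 2) := by
    rw [← pow_succ']; congr 1; omega
  have h2 : (10:ℕ) ^ n = 10 * 10 ^ (n - 1) := by
    rw [← pow_succ']; congr 1; omega
  have h3 : (10:ℕ) ^ (2 * n - 1) = 10 ^ n * 10 ^ (n - 1) := by
    rw [← pow_add]; congr 1; omega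
  set x := 10 ^ (2 * n - 1) + 10 ^ n + 1 with hx
  have hL : Nat.digits 10 x =
      (1 :: (List.replicate (n-1) 0 ++ 1 :: List.replicate (n-2) 0)) ++ [1] := by
    have he : Nat.ofDigits 10
        ((1 :: (List.replicate (n-1) 0 ++ 1 :: List.replicate (n-2) 0)) ++ [1]) = x := by
      simp only [Nat.ofDigits_append, Nat.ofDigits_cons, ofDigits_rep0,
        List.length_cons, List.length_append, List.length_replicate,
        Nat.ofDigits_nil, Nat.ofDigits_singleton]
      rw [hx, h3, h2, h1]
      have hp : (10:ℕ) ^ (n - 1 + (n - 2 + 1) + 1) = 1000 * 10 ^ (n-2) * 10 ^ (n-2) := by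
        rw [show n - 1 + (n - 2 + 1) + 1 = (n-2) + ((n-2) + 3) by omega, pow_add, pow_add]
        ring
      rw [hp]
      ring
    rw [← he]
    refine digits_of_list _ _ ?_ (by norm_num)
    intro l hl
    simp [List.mem_replicate] at hl
    omega
  have hrev : rev x = 10 ^ (2 * n - 1) + 10 ^ (n - 1) + 1 := by
    rw [rev, hL]
    simp only [List.reverse_append, List.reverse_cons, List.reverse_replicate,
      List.reverse_nil, List.nil_append, List.cons_append, List.append_assoc]
    simp only [Nat.ofDigits_append, Nat.ofDigits_cons, ofDigits_rep0,
      List.length_cons, List.length_append, List.length_replicate,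
      Nat.ofDigits_nil, Nat.ofDigits_singleton]
    rw [h3, h2, h1]
    ring
  have hd : x - rev x = 9 * 10 ^ (n - 1) := by
    rw [hrev, hx, h2]
    omega
  have hdd : Nat.digits 10 (9 * 10 ^ (n - 1)) =
      List.replicate (n-1) 0 ++ [9] := by
    have he : Nat.ofDigits 10 (List.replicate (n-1) 0 ++ [9]) = 9 * 10 ^ (n - 1) := by
      simp only [Nat.ofDigits_append, ofDigits_rep0, List.length_replicate,
        Nat.ofDigits_singleton]
      ring
    rw [← he]
    refine digits_of_list _ _ ?_ (by norm_num)
    intro l hl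
    simp [List.mem_replicate] at hl
    omega
  have hlen : (Nat.digits 10 x).length = 2 * n := by
    rw [hL]; simp; omega
  have hpad : revPad (2 * n) (9 * 10 ^ (n - 1)) = 9 * 10 ^ n := by
    rw [revPad, hdd]
    simp only [List.length_append, List.length_replicate, List.length_singleton]
    rw [show 2 * n - (n - 1 + 1) = n by omega]
    simp only [List.reverse_append, List.reverse_replicate, List.reverse_singleton,
      List.append_assoc]
    simp only [Nat.ofDigits_append, Nat.ofDigits_cons, ofDigits_rep0,
      List.length_replicate, Nat.ofDigits_nil, Nat.ofDigits_singleton]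
    ring
  have hxgt : rev x < x := by
    rw [hrev, hx, h2]
    have : (1:ℕ) ≤ 10 ^ (n-1) := Nat.one_le_pow _ _ (by norm_num)
    omega
  refine ⟨x, hxgt, ?_⟩
  rw [ball, hd, hlen, hpad, h2]
  ring

theorem reverse_divisor_sum_two_magic (n : ℕ) (hn : 2 ≤ n) :
    ∃ B₁ B₂ : ℕ, 0 < B₁ ∧ 0 < B₂ ∧ IsBallMagic B₁ ∧ IsBallMagic B₂ ∧
      11 * (10 ^ n - 1) = B₁ + B₂ := by
  have hp : (10:ℕ) ≤ 10 ^ (n-1) := by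
    calc (10:ℕ) = 10 ^ 1 := (pow_one 10).symm
    _ ≤ 10 ^ (n-1) := Nat.pow_le_pow_right (by norm_num) (by omega)
  have h2 : (10:ℕ) ^ n = 10 * 10 ^ (n-1) := by
    rw [← pow_succ']; congr 1; omega
  refine ⟨11 * (10 ^ (n-1) - 1), 99 * 10 ^ (n-1), by omega, by positivity,
    magic1 (n-1) (by omega), magic2 n hn, by omega⟩
end
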